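/- arXiv:2603.18984 — 3 statements merged into one kernel-verified Lean document; each statement's English description precedes it below -/
import Mathlib

section
/- Let E₁ ⊇ E be sets of finite perimeter with E₁ ∩ Ω = E ∩ Ω, and suppose that for H^{N−1}-a.e. z ∈ (∂*E₁ \ ∂*E) ∩ ∂*Ω one has ν_{E₁}(z) = −ν_Ω(z). Then Γ⁺_{E₁} = Γ⁺_E ∩ ∂*E₁ up to H^{N−1}-null sets, where Γ⁺_G = {x ∈ ∂*G ∩ ∂*Ω : ν_G(x) = ν_Ω(x)}. -/
open MeasureTheory Metric Filter Set
open scoped ENNReal Topology NNReal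

noncomputable section

/-- Euclidean space `ℝ^N`. -/
abbrev EucN (N : ℕ) := EuclideanSpace ℝ (Fin N)

variable {N : ℕ}

/-- The open upper half-ball `B⁺_{r,ν}(x)`. -/
def upperHalfBall (x ν : EucN N) (r : ℝ) : Set (EucN N) :=
  {z : EucN N | dist z x < r ∧ 0 < (inner ℝ (z - x) ν : ℝ)}

/-- The open lower half-ball `B⁻_{r,ν}(x)`. -/
def lowerHalfBall (x ν : EucN N) (r : ℝ) : Set (EucN N) :=
  {z : EucN N | dist z x < r ∧ (inner ℝ (z - x) ν : ℝ) < 0}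

/-- `ν` is the measure-theoretic outer unit normal of `E` at `x`. -/
def IsOuterNormal (E : Set (EucN N)) (x ν : EucN N) : Prop :=
  ‖ν‖ = 1 ∧
    Tendsto (fun r => volume (E ∩ upperHalfBall x ν r) / volume (upperHalfBall x ν r))
      (𝓝[>] (0:ℝ)) (𝓝 0) ∧
    Tendsto (fun r => volume (E ∩ lowerHalfBall x ν r) / volume (lowerHalfBall x ν r))
      (𝓝[>] (0:ℝ)) (𝓝 1)

/-- The reduced boundary `∂*E`: points where an outer normal exists. -/
def redBoundary (E : Set (EucN N)) : Set (EucN N) := {x : EucN N | ∃ ν, IsOuterNormal E x ν}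

/- The outer normal `ν_E(x)` (an arbitrary choice when it does not exist). -/
open Classical in
def outerNormal (E : Set (EucN N)) (x : EucN N) : EucN N :=
  if h : ∃ ν, IsOuterNormal E x ν then h.choose else 0

/-- The `(N-1)`-dimensional Hausdorff measure on `ℝ^N`. -/
def HN1 (N : ℕ) : Measure (EucN N) := μH[(N : ℝ) - 1]

/-- A set of finite perimeter: `H^{N-1}(∂*E) < ∞`. -/
def HasFinPer (E : Set (EucN N)) : Prop :=
  MeasurableSet E ∧ HN1 N (redBoundary E) < ⊤

/-- A set of locally finite perimeter: its intersection with any ball has finite perimeter. -/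
def HasLocFinPer (E : Set (EucN N)) : Prop :=
  MeasurableSet E ∧ ∀ (x : EucN N) (r : ℝ), HN1 N (redBoundary (E ∩ ball x r)) < ⊤

/-- The perimeter `P(E) = H^{N-1}(∂*E)`, as a real number. -/
def peri (E : Set (EucN N)) : ℝ := (HN1 N (redBoundary E)).toReal

/-- `ω_n`: the Lebesgue measure of the unit ball of `ℝ^n`. -/
def omegaBall (n : ℕ) : ℝ := (volume (ball (0 : EuclideanSpace ℝ (Fin n)) 1)).toReal

/-- The open cylinder centered at `x`, with axis `ν`, radius `r` and height `2h`. -/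
def cylGen (x ν : EucN N) (r h : ℝ) : Set (EucN N) :=
  {z : EucN N | ‖(z - x) - (inner ℝ (z - x) ν : ℝ) • ν‖ < r ∧ |(inner ℝ (z - x) ν : ℝ)| < h}

/-- The upper half `C⁺(x,r)` of the cylinder `C(x,r)`. -/
def cylPlus (x ν : EucN N) (r : ℝ) : Set (EucN N) :=
  {z ∈ cylGen x ν r r | 0 < (inner ℝ (z - x) ν : ℝ)}

/-- The lower half `C⁻(x,r)` of the cylinder `C(x,r)`. -/
def cylMinus (x ν : EucN N) (r : ℝ) : Set (EucN N) :=
  {z ∈ cylGen x ν r r | (inner ℝ (z - x) ν : ℝ) < 0}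

/-- `Γ⁺_E`: common boundary points with equal normals. -/
def ΓPlus (E Ω : Set (EucN N)) : Set (EucN N) :=
  {x ∈ redBoundary E ∩ redBoundary Ω | outerNormal E x = outerNormal Ω x}

/-- `Γ⁻_E`: common boundary points with opposite normals. -/
def ΓMinus (E Ω : Set (EucN N)) : Set (EucN N) :=
  {x ∈ redBoundary E ∩ redBoundary Ω | outerNormal E x = -outerNormal Ω x}

/-- `x` is a point of `(N-1)`-dimensional density `1` for `Γ`. -/
def HDensOne (Γ : Set (EucN N)) (x : EucN N) : Prop :=
  Tendsto (fun r => HN1 N (Γ ∩ closedBall x r) /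
      ENNReal.ofReal (omegaBall (N-1) * r ^ (N-1)))
    (𝓝[>] (0:ℝ)) (𝓝 1)

/-!
If `E ⊆ E₁` both have an outer normal at `x`, the two normals coincide. Otherwise, for distinct
unit vectors `ν`, `μ`, the open wedge `{z | ⟪z - x, ν⟫ < 0 < ⟪z - x, μ⟫}` fills the same positive
fraction of `B⁻_{r,ν}(x)` at every scale `r`. On that wedge `E` is contained in `E₁`, which has
density zero in `B⁺_{r,μ}(x)`, so `E` cannot have density one in `B⁻_{r,ν}(x)`.

Consequently `Γ⁺_E ∩ ∂*E₁ = Γ⁺_{E₁} ∩ ∂*E`, and the symmetric difference reduces to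
`Γ⁺_{E₁} \ ∂*E`. There `ν_{E₁} = ν_Ω ≠ -ν_Ω`, so these points lie in the exceptional null set.
-/

open AffineMap

lemma isOuterNormal_outerNormal {E : Set (EucN N)} {x : EucN N} (hx : x ∈ redBoundary E) :
    IsOuterNormal E x (outerNormal E x) := by
  rw [outerNormal, dif_pos (show ∃ ν, IsOuterNormal E x ν from hx)]
  exact Exists.choose_spec _

lemma lowerHalfBall_eq_upperHalfBall_neg (x ν : EucN N) (r : ℝ) :
    lowerHalfBall x ν r = upperHalfBall x (-ν) r := by
  ext z
  simp [lowerHalfBall, upperHalfBall, inner_neg_right]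

lemma upperHalfBall_eq_image_homothety (x ν : EucN N) {r : ℝ} (hr : 0 < r) :
    upperHalfBall x ν r = homothety x r '' upperHalfBall x ν 1 := by
  ext z
  simp only [upperHalfBall, mem_ofPred_eq, mem_image]
  constructor
  · rintro ⟨hd, hi⟩
    refine ⟨homothety x r⁻¹ z, ⟨?_, ?_⟩, ?_⟩
    · rw [dist_homothety_center, Real.norm_of_nonneg (inv_nonneg.2 hr.le), dist_comm]
      exact (inv_mul_lt_one₀ hr).2 hd
    · rw [homothety_apply, vsub_eq_sub, vadd_eq_add, add_sub_cancel_right, real_inner_smul_left]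
      exact mul_pos (inv_pos.2 hr) hi
    · rw [← homothety_mul_apply, mul_inv_cancel₀ hr.ne', homothety_one, AffineMap.id_apply]
  · rintro ⟨y, ⟨hd, hi⟩, rfl⟩
    refine ⟨?_, ?_⟩
    · rw [dist_homothety_center, Real.norm_of_nonneg hr.le, dist_comm]
      exact (mul_lt_iff_lt_one_right hr).2 hd
    · rw [homothety_apply, vsub_eq_sub, vadd_eq_add, add_sub_cancel_right, real_inner_smul_left]
      exact mul_pos hr hi

lemma volume_image_homothety (x : EucN N) {r : ℝ} (hr : 0 < r) (s : Set (EucN N)) :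
    volume (homothety x r '' s) = ENNReal.ofReal (r ^ N) * volume s := by
  rw [Measure.addHaar_image_homothety, finrank_euclideanSpace_fin, abs_of_pos (pow_pos hr N)]

lemma volume_image_homothety_div (x : EucN N) {r : ℝ} (hr : 0 < r) (s t : Set (EucN N)) :
    volume (homothety x r '' s) / volume (homothety x r '' t) = volume s / volume t := by
  rw [volume_image_homothety x hr, volume_image_homothety x hr,
    ENNReal.mul_div_mul_left _ _ (ENNReal.ofReal_pos.2 (pow_pos hr N)).ne' ENNReal.ofReal_ne_top]

lemma isOpen_upperHalfBall (x ν : EucN N) (r : ℝ) : IsOpen (upperHalfBall x ν r) :=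
  show IsOpen ({z | dist z x < r} ∩ {z | 0 < (inner ℝ (z - x) ν : ℝ)}) from
    (isOpen_lt (continuous_id.dist continuous_const) continuous_const).inter
    (isOpen_lt continuous_const ((continuous_id.sub continuous_const).inner continuous_const))

lemma volume_upperHalfBall_lt_top (x ν : EucN N) (r : ℝ) : volume (upperHalfBall x ν r) < ⊤ :=
  (measure_mono fun _ hz => mem_ball.2 hz.1).trans_lt measure_ball_lt_top

lemma lowerHalfBall_inter_upperHalfBall_nonempty (x : EucN N) {ν μ : EucN N}
    (hν : ‖ν‖ = 1) (hμ : ‖μ‖ = 1) (hne : ν ≠ μ) :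
    (lowerHalfBall x ν 1 ∩ upperHalfBall x μ 1).Nonempty := by
  have hlt : inner ℝ ν μ < (1 : ℝ) := (inner_lt_one_iff_real_of_norm_eq_one hν hμ).2 hne
  have hd : dist (x + (1 / 4 : ℝ) • (μ - ν)) x < 1 := by
    rw [dist_eq_norm, add_sub_cancel_left, norm_smul]
    have := norm_sub_le μ ν
    norm_num
    linarith
  refine ⟨x + (1 / 4 : ℝ) • (μ - ν), ⟨hd, ?_⟩, hd, ?_⟩ <;>
    simp only [add_sub_cancel_left, real_inner_smul_left, inner_sub_left,
      real_inner_self_eq_norm_sq, hν, hμ, real_inner_comm ν μ] <;> nlinarith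

lemma volume_inter_lowerHalfBall_div_le {E E₁ : Set (EucN N)} (hsub : E ⊆ E₁) (x ν μ : EucN N)
    (hB : volume (upperHalfBall x μ 1) ≠ 0) {r : ℝ} (hr : 0 < r) :
    volume (E ∩ lowerHalfBall x ν r) / volume (lowerHalfBall x ν r) ≤
      volume (E₁ ∩ upperHalfBall x μ r) / volume (upperHalfBall x μ r) *
          (volume (upperHalfBall x μ 1) / volume (lowerHalfBall x ν 1)) +
        volume (lowerHalfBall x ν 1 \ upperHalfBall x μ 1) / volume (lowerHalfBall x ν 1) := by
  have hAr : lowerHalfBall x ν r = homothety x r '' lowerHalfBall x ν 1 := by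
    rw [lowerHalfBall_eq_upperHalfBall_neg, upperHalfBall_eq_image_homothety _ _ hr,
      lowerHalfBall_eq_upperHalfBall_neg]
  have hBr : upperHalfBall x μ r = homothety x r '' upperHalfBall x μ 1 :=
    upperHalfBall_eq_image_homothety _ _ hr
  have hBr0 : volume (upperHalfBall x μ r) ≠ 0 := by
    rw [hBr, volume_image_homothety x hr]
    exact mul_ne_zero (ENNReal.ofReal_pos.2 (pow_pos hr N)).ne' hB
  have hcover : E ∩ lowerHalfBall x ν r ⊆
      (E₁ ∩ upperHalfBall x μ r) ∪ (lowerHalfBall x ν r \ upperHalfBall x μ r) :=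
    fun z ⟨hzE, hzA⟩ => (em (z ∈ upperHalfBall x μ r)).imp
      (fun hzB => ⟨hsub hzE, hzB⟩) (fun hzB => ⟨hzA, hzB⟩)
  calc volume (E ∩ lowerHalfBall x ν r) / volume (lowerHalfBall x ν r)
      ≤ (volume (E₁ ∩ upperHalfBall x μ r) +
          volume (lowerHalfBall x ν r \ upperHalfBall x μ r)) / volume (lowerHalfBall x ν r) :=
        ENNReal.div_le_div_right ((measure_mono hcover).trans (measure_union_le _ _)) _
    _ = volume (E₁ ∩ upperHalfBall x μ r) / volume (upperHalfBall x μ r) *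
          (volume (upperHalfBall x μ r) / volume (lowerHalfBall x ν r)) +
          volume (lowerHalfBall x ν r \ upperHalfBall x μ r) / volume (lowerHalfBall x ν r) := by
        rw [ENNReal.add_div, ← mul_div_assoc,
          ENNReal.div_mul_cancel hBr0 (volume_upperHalfBall_lt_top x μ r).ne]
    _ = _ := by
        rw [hAr, hBr, ← image_sdiff (homothety_injective x hr.ne'),
          volume_image_homothety_div x hr, volume_image_homothety_div x hr]

theorem IsOuterNormal.eq_of_subset {E E₁ : Set (EucN N)} (hsub : E ⊆ E₁) {x ν μ : EucN N}
    (hν : IsOuterNormal E x ν) (hμ : IsOuterNormal E₁ x μ) : ν = μ := by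
  by_contra hne
  set A := lowerHalfBall x ν 1
  set B := upperHalfBall x μ 1
  have hA_eq : A = upperHalfBall x (-ν) 1 := lowerHalfBall_eq_upperHalfBall_neg x ν 1
  have hAB : 0 < volume (A ∩ B) :=
    ((hA_eq ▸ isOpen_upperHalfBall x (-ν) 1).inter (isOpen_upperHalfBall x μ 1)).measure_pos
      volume (lowerHalfBall_inter_upperHalfBall_nonempty x hν.1 hμ.1 hne)
  have hA0 : volume A ≠ 0 := (hAB.trans_le (measure_mono inter_subset_left)).ne'
  have hB0 : volume B ≠ 0 := (hAB.trans_le (measure_mono inter_subset_right)).ne'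
  have hAtop : volume A ≠ ⊤ := hA_eq ▸ (volume_upperHalfBall_lt_top x (-ν) 1).ne
  have hq : volume (A \ B) / volume A < 1 := by
    rw [ENNReal.div_lt_iff (Or.inl hA0) (Or.inl hAtop), one_mul,
      ← measure_sdiff_add_inter A (isOpen_upperHalfBall x μ 1).measurableSet]
    exact ENNReal.lt_add_right (measure_ne_top_of_subset sdiff_subset hAtop) hAB.ne'
  have hlim := (ENNReal.Tendsto.mul_const hμ.2.1
    (Or.inr (ENNReal.div_ne_top (volume_upperHalfBall_lt_top x μ 1).ne hA0))).add_const
      (volume (A \ B) / volume A)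
  have hle := le_of_tendsto_of_tendsto hν.2.2 hlim <| eventually_nhdsWithin_of_forall
    fun _ hr => volume_inter_lowerHalfBall_div_le hsub x ν μ hB0 hr
  rw [zero_mul, zero_add] at hle
  exact hq.not_ge hle

lemma outerNormal_eq_of_subset {E E₁ : Set (EucN N)} (hsub : E ⊆ E₁) {x : EucN N}
    (hx : x ∈ redBoundary E) (hx₁ : x ∈ redBoundary E₁) : outerNormal E x = outerNormal E₁ x :=
  (isOuterNormal_outerNormal hx).eq_of_subset hsub (isOuterNormal_outerNormal hx₁)

lemma ΓPlus_inter_redBoundary_of_subset {E E₁ : Set (EucN N)} (hsub : E ⊆ E₁)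
    (Ω : Set (EucN N)) : ΓPlus E Ω ∩ redBoundary E₁ = ΓPlus E₁ Ω ∩ redBoundary E := by
  ext x
  constructor
  · rintro ⟨⟨⟨hxE, hxΩ⟩, heq⟩, hxE₁⟩
    exact ⟨⟨⟨hxE₁, hxΩ⟩, (outerNormal_eq_of_subset hsub hxE hxE₁).symm.trans heq⟩, hxE⟩
  · rintro ⟨⟨⟨hxE₁, hxΩ⟩, heq⟩, hxE⟩
    exact ⟨⟨⟨hxE, hxΩ⟩, (outerNormal_eq_of_subset hsub hxE hxE₁).trans heq⟩, hxE₁⟩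

lemma ΓPlus_diff_redBoundary_subset (E₁ E Ω : Set (EucN N)) :
    ΓPlus E₁ Ω \ redBoundary E ⊆
      {z ∈ (redBoundary E₁ \ redBoundary E) ∩ redBoundary Ω |
        outerNormal E₁ z ≠ -outerNormal Ω z} := by
  rintro x ⟨⟨⟨hxE₁, hxΩ⟩, heq⟩, hxE⟩
  refine ⟨⟨⟨hxE₁, hxE⟩, hxΩ⟩, fun h => ?_⟩
  have hunit : ‖outerNormal Ω x‖ = 1 := (isOuterNormal_outerNormal hxΩ).1
  rw [heq, eq_neg_iff_add_eq_zero, ← two_smul ℝ, smul_eq_zero] at h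
  simp [h.resolve_left two_ne_zero] at hunit

theorem gamma_plus_formula_general {N : ℕ} (E E₁ Ω : Set (EucN N))
    (hsub : E ⊆ E₁)
    (hnorm : HN1 N {z ∈ (redBoundary E₁ \ redBoundary E) ∩ redBoundary Ω |
      outerNormal E₁ z ≠ -outerNormal Ω z} = 0) :
    HN1 N ((ΓPlus E₁ Ω \ (ΓPlus E Ω ∩ redBoundary E₁)) ∪
      ((ΓPlus E Ω ∩ redBoundary E₁) \ ΓPlus E₁ Ω)) = 0 := by
  apply measure_mono_null _ hnorm
  rw [ΓPlus_inter_redBoundary_of_subset hsub, sdiff_self_inter,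
    sdiff_eq_empty.2 inter_subset_left, union_empty]
  exact ΓPlus_diff_redBoundary_subset E₁ E Ω

/-- If `E₁ ⊇ E`, `E₁ ∩ Ω = E ∩ Ω` and a.e. new common boundary point has reversed normal,
then `Γ⁺_{E₁} = Γ⁺_E ∩ ∂*E₁` up to `H^{N-1}`-null sets. -/
theorem gamma_plus_formula {N : ℕ} (E E₁ Ω : Set (EucN N))
    (hE : HasFinPer E) (hE₁ : HasFinPer E₁) (hΩ : HasFinPer Ω)
    (hsub : E ⊆ E₁) (hcap : E₁ ∩ Ω = E ∩ Ω)
    (hnorm : HN1 N {z ∈ (redBoundary E₁ \ redBoundary E) ∩ redBoundary Ω |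
      outerNormal E₁ z ≠ -outerNormal Ω z} = 0) :
    HN1 N ((ΓPlus E₁ Ω \ (ΓPlus E Ω ∩ redBoundary E₁)) ∪
      ((ΓPlus E Ω ∩ redBoundary E₁) \ ΓPlus E₁ Ω)) = 0 :=
  gamma_plus_formula_general E E₁ Ω hsub hnorm
end
end

section
/- Let Ω be a set of finite perimeter in R^N and η > 0. Then the set U = Ω^{(1)} \ closure({x : dist(x, ∂Ω) < η}) is open, where Ω^{(1)} is the set of points of Lebesgue density 1 of Ω and ∂Ω is the topological boundary. -/
open MeasureTheory Metric Filter Set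
open scoped ENNReal Topology NNReal

noncomputable section

variable {N : ℕ}

/-!
A point at distance at least `η > 0` from `∂Ω` lies either in the interior of `Ω` or in the
interior of its complement, where the density of `Ω` is `0`. Hence `U` is the interior of `Ω`
minus a closed set.
-/

section LebesgueDensity

variable {α : Type*} [PseudoMetricSpace α] [MeasurableSpace α] {μ : Measure α} {s : Set α}
  {x : α}

theorem tendsto_measure_inter_ball_div_of_mem_interior [ProperSpace α]
    [IsFiniteMeasureOnCompacts μ] [μ.IsOpenPosMeasure] (hx : x ∈ interior s) :
    Tendsto (fun r => μ (s ∩ ball x r) / μ (ball x r)) (𝓝[>] 0) (𝓝 1) := by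
  obtain ⟨ε, hε, hball⟩ := Metric.isOpen_iff.1 isOpen_interior x hx
  refine tendsto_const_nhds.congr' ?_
  filter_upwards [Ioo_mem_nhdsGT hε] with r hr
  have hsub : ball x r ⊆ s := (ball_subset_ball hr.2.le).trans (hball.trans interior_subset)
  rw [inter_eq_self_of_subset_right hsub,
    ENNReal.div_self (measure_ball_pos μ x hr.1).ne' measure_ball_lt_top.ne]

theorem tendsto_measure_inter_ball_div_of_mem_interior_compl (hx : x ∈ interior sᶜ) :
    Tendsto (fun r => μ (s ∩ ball x r) / μ (ball x r)) (𝓝[>] 0) (𝓝 0) := by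
  obtain ⟨ε, hε, hball⟩ := Metric.isOpen_iff.1 isOpen_interior x hx
  refine tendsto_const_nhds.congr' ?_
  filter_upwards [Ioo_mem_nhdsGT hε] with r hr
  have hsub : ball x r ⊆ sᶜ := (ball_subset_ball hr.2.le).trans (hball.trans interior_subset)
  rw [(disjoint_compl_right.mono_right hsub).inter_eq, measure_empty, ENNReal.zero_div]

theorem setOf_tendsto_measure_inter_ball_div_one_diff_frontier [ProperSpace α]
    [IsFiniteMeasureOnCompacts μ] [μ.IsOpenPosMeasure] :
    {x | Tendsto (fun r => μ (s ∩ ball x r) / μ (ball x r)) (𝓝[>] 0) (𝓝 1)} \ frontier s =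
      interior s := by
  ext x
  refine ⟨fun ⟨hdens, hfr⟩ => ?_, fun hx =>
    ⟨tendsto_measure_inter_ball_div_of_mem_interior hx, fun hfr => hfr.2 hx⟩⟩
  by_contra hint
  have hext : x ∈ interior sᶜ := by
    rw [interior_compl]
    exact fun hcl => hfr ⟨hcl, hint⟩
  exact one_ne_zero (tendsto_nhds_unique hdens
    (tendsto_measure_inter_ball_div_of_mem_interior_compl hext))

end LebesgueDensity

theorem density_one_minus_nbhd_open_general {N : ℕ} (Ω : Set (EucN N))
    (η : ℝ) (hη : 0 < η) :
    IsOpen ({x : EucN N | Tendsto (fun r => volume (Ω ∩ ball x r) / volume (ball x r))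
        (𝓝[>] (0:ℝ)) (𝓝 1)} \
      closure {x : EucN N | Metric.infDist x (frontier Ω) < η}) := by
  have hfrontier : frontier Ω ⊆ closure {x | infDist x (frontier Ω) < η} := fun x hx =>
    subset_closure (by rwa [mem_ofPred_eq, infDist_zero_of_mem hx])
  rw [← union_eq_right.2 hfrontier, ← sdiff_sdiff,
    setOf_tendsto_measure_inter_ball_div_one_diff_frontier]
  exact isOpen_interior.sdiff isClosed_closure

/-- The set `U = Ω^{(1)} \ closure {x : dist(x,∂Ω) < η}` is open. -/
theorem density_one_minus_nbhd_open {N : ℕ} (Ω : Set (EucN N)) (hΩ : HasFinPer Ω)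
    (η : ℝ) (hη : 0 < η) :
    IsOpen ({x : EucN N | Tendsto (fun r => volume (Ω ∩ ball x r) / volume (ball x r))
        (𝓝[>] (0:ℝ)) (𝓝 1)} \
      closure {x : EucN N | Metric.infDist x (frontier Ω) < η}) :=
  density_one_minus_nbhd_open_general Ω η hη
end
end

section
/- Let f : R^N → (0, +∞) be locally integrable and g : R^N × S^{N−1} → (0, +∞) be a Borel density, and suppose there is a constant M > 0 with g(x, ν) ≤ M f(x) for all x, ν. Let E be a set of finite g-perimeter with |E|_f < +∞. Then for every ε > 0 there exists R > 0 such that H = E ∩ B_R satisfies |E △ H|_f < ε and H^{N−1}_g(∂*E △ ∂*H) < ε. -/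
/-!
Truncating `E` at radius `R` changes the reduced boundary only outside the open ball: by locality,
points of `∂*E` with `‖z‖ < R` keep their normal and points with `‖z‖ > R` are lost, while the new
boundary lies on the sphere `‖z‖ = R` and in the essential closure of `E`. The volume error and the
lost part of `∂*E` are tails of finite integrals. Since `g ≤ M f`, the new part costs at most
`M ∫_{∂B_R ∩ cl* E} f dH^{N-1}`, and the Eilenberg inequality
`∫ (∫_{A ∩ ∂B_R} F dH^{N-1}) dR ≤ C ∫_A F` makes this small for arbitrarily large `R`. That
inequality is proved for sets from Vitali coverings of open neighbourhoods of `A`, and extended to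
functions by a dyadic layer decomposition.
-/

open MeasureTheory Metric Filter Set
open scoped ENNReal Topology NNReal

noncomputable section

variable {N : ℕ}

theorem AEMeasurable.exists_measurable_ge {α : Type*} [MeasurableSpace α] {μ : Measure α}
    {f : α → ℝ≥0∞} (hf : AEMeasurable f μ) : ∃ g, Measurable g ∧ f ≤ g ∧ f =ᵐ[μ] g := by
  classical
  set Z := toMeasurable μ {x | f x ≠ hf.mk f x}
  have hZ : μ Z = 0 := by rw [measure_toMeasurable]; exact hf.ae_eq_mk
  refine ⟨Z.piecewise (fun _ => ⊤) (hf.mk f),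
    Measurable.piecewise (measurableSet_toMeasurable _ _) measurable_const hf.measurable_mk,
    fun x => ?_, ?_⟩
  · by_cases hx : x ∈ Z
    · simp [hx]
    · simpa [hx] using (not_not.1 fun h => hx (subset_toMeasurable _ _ h)).le
  · filter_upwards [hf.ae_eq_mk, measure_eq_zero_iff_ae_notMem.1 hZ] with x hx hxZ
    simp [hxZ, hx]

theorem tendsto_setLIntegral_setOf_le_atTop {α : Type*} [MeasurableSpace α] {ν : Measure α}
    {p : α → ℝ} (hp : Measurable p) {G : α → ℝ≥0∞} (hG : ∫⁻ z, G z ∂ν ≠ ⊤) :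
    Tendsto (fun R => ∫⁻ z in {z | R ≤ p z}, G z ∂ν) atTop (𝓝 0) := by
  have hmeas (R : ℝ) : MeasurableSet {z | R ≤ p z} := measurableSet_le measurable_const hp
  have hanti : Antitone fun R : ℝ => {z | R ≤ p z} := fun R R' h z hz => le_trans h hz
  have hempty : ⋂ R : ℝ, {z | R ≤ p z} = ∅ :=
    eq_empty_of_forall_notMem fun z hz => by
      have : p z + 1 ≤ p z := mem_iInter.1 hz (p z + 1)
      linarith
  have := tendsto_measure_iInter_atTop (μ := ν.withDensity G)
    (fun R => (hmeas R).nullMeasurableSet) hanti ⟨0, by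
      rw [withDensity_apply _ (hmeas 0)]
      exact ne_top_of_le_ne_top hG (setLIntegral_le_lintegral _ _)⟩
  rw [hempty, measure_empty] at this
  exact this.congr fun R => withDensity_apply _ (hmeas R)

theorem frequently_lt_of_lintegral_ne_top {Φ : ℝ → ℝ≥0∞} (hΦ : ∫⁻ R, Φ R ≠ ⊤) {η : ℝ≥0∞}
    (hη : η ≠ 0) : ∃ᶠ R in atTop, Φ R < η := by
  rw [frequently_atTop]
  by_contra! h
  obtain ⟨R₀, hR₀⟩ := h
  refine hΦ (top_le_iff.1 ?_)
  calc ⊤ = ∫⁻ _ in Ici R₀, η := by rw [setLIntegral_const, Real.volume_Ici, ENNReal.mul_top hη]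
    _ ≤ ∫⁻ R in Ici R₀, Φ R := setLIntegral_mono' measurableSet_Ici hR₀
    _ ≤ ∫⁻ R, Φ R := setLIntegral_le_lintegral _ _

theorem exists_measurable_ge_lintegral_le_of_forall_add {β : Type*} [MeasurableSpace β]
    {ν : Measure β} {F : β → ℝ≥0∞} {b c : ℝ≥0∞} (hc : c ≠ ⊤)
    (h : ∀ e : ℝ≥0∞, e ≠ 0 → ∃ φ, Measurable φ ∧ F ≤ φ ∧ ∫⁻ x, φ x ∂ν ≤ c * (b + e)) :
    ∃ φ, Measurable φ ∧ F ≤ φ ∧ ∫⁻ x, φ x ∂ν ≤ c * b := by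
  choose φ hφm hFφ hφ using fun n : ℕ =>
    h (n : ℝ≥0∞)⁻¹ (ENNReal.inv_ne_zero.2 (ENNReal.natCast_ne_top n))
  refine ⟨fun x => ⨅ n, φ n x, Measurable.iInf hφm, fun x => le_iInf fun n => hFφ n x, ?_⟩
  have hlim : Tendsto (fun n : ℕ => c * (b + (n : ℝ≥0∞)⁻¹)) atTop (𝓝 (c * (b + 0))) :=
    ENNReal.Tendsto.const_mul (tendsto_const_nhds.add ENNReal.tendsto_inv_nat_nhds_zero) (Or.inr hc)
  rw [add_zero] at hlim
  exact ge_of_tendsto' hlim fun n => (lintegral_mono fun x => iInf_le _ n).trans (hφ n)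

def dyadicLayerSum (y : ℝ≥0∞) : ℝ≥0∞ :=
  ∑' k : ℤ, (Ici (ENNReal.ofReal (2 ^ k))).indicator (fun _ => ENNReal.ofReal (2 ^ (k + 1))) y

theorem le_dyadicLayerSum (y : ℝ≥0∞) : y ≤ dyadicLayerSum y := by
  rcases eq_or_ne y 0 with rfl | hy0
  · exact zero_le
  rcases eq_or_ne y ⊤ with rfl | hyT
  · refine (ENNReal.eq_top_of_forall_nnreal_le fun r => ?_).ge
    obtain ⟨n, hn⟩ := pow_unbounded_of_one_lt (r : ℝ) one_lt_two
    calc (r : ℝ≥0∞) = ENNReal.ofReal r := by simp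
      _ ≤ ENNReal.ofReal (2 ^ ((n : ℤ) + 1)) := by
        gcongr
        rw [zpow_add_one₀ two_ne_zero, zpow_natCast]
        linarith [pow_pos (two_pos (α := ℝ)) n]
      _ = (Ici (ENNReal.ofReal (2 ^ (n : ℤ)))).indicator
            (fun _ => ENNReal.ofReal (2 ^ ((n : ℤ) + 1))) ⊤ := by simp
      _ ≤ dyadicLayerSum ⊤ := ENNReal.le_tsum (n : ℤ)
  obtain ⟨n, hn⟩ := exists_mem_Ico_zpow (ENNReal.toReal_pos hy0 hyT) one_lt_two
  calc y = ENNReal.ofReal y.toReal := (ENNReal.ofReal_toReal hyT).symm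
    _ ≤ ENNReal.ofReal (2 ^ (n + 1)) := ENNReal.ofReal_le_ofReal hn.2.le
    _ = (Ici (ENNReal.ofReal (2 ^ n))).indicator (fun _ => ENNReal.ofReal (2 ^ (n + 1))) y := by
      have hy : ENNReal.ofReal (2 ^ n) ≤ y := by
        rw [← ENNReal.ofReal_toReal hyT]
        exact ENNReal.ofReal_le_ofReal hn.1
      rw [indicator_of_mem (mem_Ici.2 hy)]
    _ ≤ dyadicLayerSum y := ENNReal.le_tsum n

theorem ofReal_two_zpow_add_one_eq (k : ℤ) :
    ENNReal.ofReal (2 ^ (k + 1)) = 4 * volume (Ioc ((2 : ℝ) ^ (k - 1)) (2 ^ k)) := by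
  rw [Real.volume_Ioc, ← ENNReal.ofReal_ofNat 4, ← ENNReal.ofReal_mul (by norm_num)]
  congr 1
  have h : (2 : ℝ) ^ (k + 1) = 2 ^ (k - 1) * 4 := by
    rw [show k + 1 = k - 1 + 2 by ring, zpow_add₀ two_ne_zero]; norm_num
  rw [h, show (2 : ℝ) ^ k = 2 ^ (k - 1) * 2 by rw [← zpow_add_one₀ two_ne_zero, sub_add_cancel]]
  ring

theorem dyadicLayerSum_le (y : ℝ≥0∞) : dyadicLayerSum y ≤ 4 * y := by
  rcases eq_or_ne y ⊤ with rfl | hyT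
  · simp
  set I : ℤ → Set ℝ := fun k => Ioc ((2 : ℝ) ^ (k - 1)) (2 ^ k)
  have hI : Pairwise (Function.onFun Disjoint I) :=
    (pairwise_disjoint_on I).2 fun m n hmn =>
      Ioc_disjoint_Ioc_of_le (zpow_le_zpow_right₀ one_le_two (by omega))
  have hterm (k : ℤ) : (Ici (ENNReal.ofReal (2 ^ k))).indicator
      (fun _ => ENNReal.ofReal (2 ^ (k + 1))) y ≤ 4 * volume (I k ∩ Ioc 0 y.toReal) := by
    by_cases hk : ENNReal.ofReal (2 ^ k) ≤ y
    · rw [indicator_of_mem (mem_Ici.2 hk), ofReal_two_zpow_add_one_eq, inter_eq_left.2]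
      rw [← ENNReal.ofReal_toReal hyT, ENNReal.ofReal_le_ofReal_iff ENNReal.toReal_nonneg] at hk
      exact Ioc_subset_Ioc (zpow_pos two_pos _).le hk
    · rw [indicator_of_notMem (notMem_Ici.2 (not_le.1 hk))]
      exact zero_le
  calc dyadicLayerSum y ≤ ∑' k, 4 * volume (I k ∩ Ioc 0 y.toReal) := ENNReal.tsum_le_tsum hterm
    _ = 4 * volume (⋃ k, I k ∩ Ioc 0 y.toReal) := by
      rw [ENNReal.tsum_mul_left, measure_iUnion
        (hI.mono fun _ _ h => h.mono inter_subset_left inter_subset_left)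
        fun _ => measurableSet_Ioc.inter measurableSet_Ioc]
    _ ≤ 4 * volume (Ioc 0 y.toReal) := by gcongr; exact iUnion_subset fun _ => inter_subset_right
    _ = 4 * y := by rw [Real.volume_Ioc, sub_zero, ENNReal.ofReal_toReal hyT]

theorem lintegral_dyadicLayerSum {α : Type*} [MeasurableSpace α] (ν : Measure α) {F : α → ℝ≥0∞}
    (hF : Measurable F) :
    ∫⁻ z, dyadicLayerSum (F z) ∂ν =
      ∑' k : ℤ, ENNReal.ofReal (2 ^ (k + 1)) * ν {z | ENNReal.ofReal (2 ^ k) ≤ F z} := by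
  have hmeas (k : ℤ) : MeasurableSet {z | ENNReal.ofReal (2 ^ k) ≤ F z} :=
    measurableSet_le measurable_const hF
  refine (lintegral_tsum fun k => ?_).trans
    (tsum_congr fun k => lintegral_indicator_const (hmeas k) _)
  exact ((measurable_const.indicator measurableSet_Ici).comp hF).aemeasurable

theorem IsOpen.exists_countable_pairwiseDisjoint_closedBall_cover {α : Type*} [MetricSpace α]
    [TopologicalSpace.SeparableSpace α] {U : Set α} (hU : IsOpen U) {δ : ℝ} (hδ : 0 < δ) :
    ∃ (u : Set α) (ρ : α → ℝ), u.Countable ∧ (∀ b ∈ u, 0 < ρ b ∧ ρ b ≤ δ) ∧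
      u.PairwiseDisjoint (fun b => closedBall b (ρ b)) ∧ (∀ b ∈ u, closedBall b (ρ b) ⊆ U) ∧
      U ⊆ ⋃ b ∈ u, closedBall b (4 * ρ b) := by
  choose! ε hε hεU using Metric.isOpen_iff.1 hU
  set ρ : α → ℝ := fun y => min δ (ε y / 2)
  have hρ (y) (hy : y ∈ U) : 0 < ρ y := lt_min hδ (half_pos (hε y hy))
  have hρU (y) (hy : y ∈ U) : closedBall y (ρ y) ⊆ U :=
    (closedBall_subset_ball ((min_le_right _ _).trans_lt (half_lt_self (hε y hy)))).trans
      (hεU y hy)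
  obtain ⟨u, huU, hdisj, hcov⟩ :=
    Vitali.exists_disjoint_subfamily_covering_enlargement_closedBall U id ρ δ
      (fun _ _ => min_le_left _ _) 4 (by norm_num)
  refine ⟨u, ρ, hdisj.countable_of_nonempty_interior fun b hb => ?_,
    fun b hb => ⟨hρ b (huU hb), min_le_left _ _⟩, hdisj, fun b hb => hρU b (huU hb), fun a ha => ?_⟩
  · exact ⟨b, ball_subset_interior_closedBall (mem_ball_self (hρ b (huU hb)))⟩
  · obtain ⟨b, hb, hab⟩ := hcov a ha
    exact mem_biUnion hb (hab (mem_closedBall_self (hρ a ha).le))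

section RadialCover

variable {V : Type*} [NormedAddCommGroup V]

/-- `R ∈ Icc (‖b‖ - r b) (‖b‖ + r b)` exactly when `closedBall b (r b)` can meet `sphere 0 R`,
and `2 * r b` bounds the diameter of that ball. -/
def radialCoverSum (d : ℝ) (u : Set V) (r : V → ℝ) (R : ℝ) : ℝ≥0∞ :=
  ∑' b : u, (Icc (‖(b : V)‖ - r b) (‖(b : V)‖ + r b)).indicator
    (fun _ => ENNReal.ofReal (2 * r b) ^ d) R

theorem measurable_radialCoverSum {d : ℝ} {u : Set V} (hu : u.Countable) (r : V → ℝ) :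
    Measurable (radialCoverSum d u r) :=
  have := hu.to_subtype
  Measurable.tsum fun _ => measurable_const.indicator measurableSet_Icc

theorem lintegral_radialCoverSum {d : ℝ} {u : Set V} (hu : u.Countable) {r : V → ℝ}
    (hr : ∀ b ∈ u, 0 < r b) :
    ∫⁻ R, radialCoverSum d u r R = ∑' b : u, ENNReal.ofReal (2 * r b) ^ (d + 1) := by
  have := hu.to_subtype
  simp only [radialCoverSum]
  rw [lintegral_tsum fun _ =>
    (measurable_const.indicator measurableSet_Icc).aemeasurable]
  refine tsum_congr fun b => ?_
  have h2r : 0 < 2 * r b := by linarith [hr b b.2]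
  rw [lintegral_indicator_const measurableSet_Icc, Real.volume_Icc,
    ENNReal.rpow_add _ _ (ENNReal.ofReal_pos.2 h2r).ne' ENNReal.ofReal_ne_top, ENNReal.rpow_one]
  ring_nf

theorem hausdorffMeasure_inter_sphere_le_liminf_radialCoverSum [MeasurableSpace V] [BorelSpace V]
    {d : ℝ} (hd : 0 ≤ d) {A : Set V}
    {u : ℕ → Set V} {r : ℕ → V → ℝ} {δ : ℕ → ℝ} (hu : ∀ j, (u j).Countable)
    (hδ : Tendsto δ atTop (𝓝 0)) (hrδ : ∀ j, ∀ b ∈ u j, r j b ≤ δ j)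
    (hA : ∀ j, A ⊆ ⋃ b ∈ u j, closedBall b (r j b)) (R : ℝ) :
    μH[d] (A ∩ sphere 0 R) ≤ liminf (fun j => radialCoverSum d (u j) (r j) R) atTop := by
  have := fun j => (hu j).to_subtype
  have hdiam (j) (b : u j) : ediam (closedBall (b : V) (r j b)) ≤ ENNReal.ofReal (2 * r j b) :=
    ediam_le_of_forall_dist_le fun w hw v hv => by
      linarith [dist_triangle_right w v b, mem_closedBall.1 hw, mem_closedBall.1 hv]
  -- cover `A ∩ sphere 0 R` by the balls that meet the sphere
  refine (Measure.hausdorffMeasure_le_liminf_tsum d (A ∩ sphere 0 R)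
    (fun j => ENNReal.ofReal (2 * δ j)) ?_
    (fun j (b : {b : u j // (closedBall (b : V) (r j b) ∩ sphere 0 R).Nonempty}) =>
      closedBall (b : V) (r j b)) ?_ ?_).trans (liminf_le_liminf (Eventually.of_forall fun j => ?_))
  · simpa using ENNReal.tendsto_ofReal (hδ.const_mul 2)
  · exact Eventually.of_forall fun j b =>
      (hdiam j b).trans (ENNReal.ofReal_le_ofReal (by linarith [hrδ j b b.1.2]))
  · refine Eventually.of_forall fun j z hz => ?_
    obtain ⟨b, hb, hzb⟩ := mem_iUnion₂.1 (hA j hz.1)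
    exact mem_iUnion.2 ⟨⟨⟨b, hb⟩, z, hzb, hz.2⟩, hzb⟩
  · refine (ENNReal.tsum_le_tsum fun b => ?_).trans
      (ENNReal.tsum_comp_le_tsum_of_injective Subtype.val_injective _)
    obtain ⟨z, hzb, hzR⟩ := b.2
    have hR : R ∈ Icc (‖(b : V)‖ - r j b) (‖(b : V)‖ + r j b) := by
      rw [mem_sphere_zero_iff_norm] at hzR
      have := abs_norm_sub_norm_le (b : V) z
      rw [← dist_eq_norm, dist_comm, hzR, abs_le] at this
      constructor <;> linarith [mem_closedBall.1 hzb]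
    rw [indicator_of_mem hR]
    exact ENNReal.rpow_le_rpow (hdiam j b) hd

end RadialCover

section Eilenberg

open Module

variable {V : Type*} [NormedAddCommGroup V] [NormedSpace ℝ V] [FiniteDimensional ℝ V]
  [MeasurableSpace V] [BorelSpace V] (μ : Measure V) [μ.IsAddHaarMeasure]

theorem ofReal_mul_rpow_finrank_eq {c r : ℝ} (hc : 0 ≤ c) (hr : 0 ≤ r) (x : V) :
    ENNReal.ofReal (c * r) ^ (finrank ℝ V : ℝ) =
      ENNReal.ofReal (c ^ finrank ℝ V) / μ (ball 0 1) * μ (closedBall x r) := by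
  rw [Measure.addHaar_closedBall μ x hr, mul_comm _ (μ _), ← mul_assoc,
    ENNReal.div_mul_cancel (measure_ball_pos μ _ one_pos).ne' measure_ball_lt_top.ne,
    ← ENNReal.ofReal_mul (pow_nonneg hc _), ← mul_pow, ENNReal.rpow_natCast,
    ENNReal.ofReal_pow (mul_nonneg hc hr)]

theorem exists_hausdorffMeasure_inter_sphere_le_add (hV : 0 < finrank ℝ V) (A : Set V)
    {e : ℝ≥0∞} (he : e ≠ 0) :
    ∃ φ : ℝ → ℝ≥0∞, Measurable φ ∧
      (fun R => μH[(finrank ℝ V : ℝ) - 1] (A ∩ sphere 0 R)) ≤ φ ∧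
      ∫⁻ R, φ R ≤ ENNReal.ofReal (8 ^ finrank ℝ V) / μ (ball 0 1) * (μ A + e) := by
  obtain ⟨U, hAU, hU, hμU⟩ := exists_isOpen_le_add A μ he
  choose u ρ hu hρ hdisj hρU hcov using fun j : ℕ =>
    hU.exists_countable_pairwiseDisjoint_closedBall_cover (Nat.one_div_pos_of_nat (n := j))
  have hd : (0 : ℝ) ≤ (finrank ℝ V : ℝ) - 1 := by
    rw [sub_nonneg, Nat.one_le_cast]; exact hV
  refine ⟨fun R => liminf (fun j => radialCoverSum ((finrank ℝ V : ℝ) - 1) (u j)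
      (fun b => 4 * ρ j b) R) atTop,
    Measurable.liminf fun j => measurable_radialCoverSum (hu j) _,
    fun R => ?_, ?_⟩
  · exact hausdorffMeasure_inter_sphere_le_liminf_radialCoverSum hd hu
      (δ := fun j : ℕ => 4 * (1 / ((j : ℝ) + 1)))
      (by simpa using tendsto_one_div_add_atTop_nhds_zero_nat.const_mul (4 : ℝ))
      (fun j b hb => by linarith [(hρ j b hb).2]) (fun j => hAU.trans (hcov j)) R
  refine (lintegral_liminf_le fun j => measurable_radialCoverSum (hu j) _).trans ?_
  refine (liminf_le_liminf (Eventually.of_forall fun j => ?_)).trans (liminf_const _).le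
  have := (hu j).to_subtype
  calc ∫⁻ R, radialCoverSum ((finrank ℝ V : ℝ) - 1) (u j) (fun b => 4 * ρ j b) R
      = ∑' b : u j, ENNReal.ofReal (8 ^ finrank ℝ V) / μ (ball 0 1) *
          μ (closedBall (b : V) (ρ j b)) := by
        rw [lintegral_radialCoverSum (hu j) fun b hb => by linarith [(hρ j b hb).1]]
        refine tsum_congr fun b => ?_
        rw [sub_add_cancel, ← mul_assoc, show (2 : ℝ) * 4 = 8 by norm_num,
          ofReal_mul_rpow_finrank_eq μ (by norm_num) (hρ j b b.2).1.le]
    _ = ENNReal.ofReal (8 ^ finrank ℝ V) / μ (ball 0 1) * μ (⋃ b ∈ u j, closedBall b (ρ j b)) := by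
        rw [ENNReal.tsum_mul_left,
          measure_biUnion (hu j) (hdisj j) fun _ _ => measurableSet_closedBall]
    _ ≤ ENNReal.ofReal (8 ^ finrank ℝ V) / μ (ball 0 1) * (μ A + e) := by
        gcongr
        exact (measure_mono (iUnion₂_subset (hρU j))).trans hμU

theorem exists_hausdorffMeasure_inter_sphere_le (hV : 0 < finrank ℝ V) (A : Set V) :
    ∃ φ : ℝ → ℝ≥0∞, Measurable φ ∧
      (fun R => μH[(finrank ℝ V : ℝ) - 1] (A ∩ sphere 0 R)) ≤ φ ∧
      ∫⁻ R, φ R ≤ ENNReal.ofReal (8 ^ finrank ℝ V) / μ (ball 0 1) * μ A :=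
  exists_measurable_ge_lintegral_le_of_forall_add
    (ENNReal.div_ne_top ENNReal.ofReal_ne_top (measure_ball_pos μ _ one_pos).ne')
    fun _ he => exists_hausdorffMeasure_inter_sphere_le_add μ hV A he

theorem exists_lintegral_inter_sphere_le (hV : 0 < finrank ℝ V) {F : V → ℝ≥0∞}
    (hF : Measurable F) (A : Set V) :
    ∃ Φ : ℝ → ℝ≥0∞,
      (∀ R, ∫⁻ z in A ∩ sphere 0 R, F z ∂μH[(finrank ℝ V : ℝ) - 1] ≤ Φ R) ∧
      ∫⁻ R, Φ R ≤ 4 * (ENNReal.ofReal (8 ^ finrank ℝ V) / μ (ball 0 1) * ∫⁻ z in A, F z ∂μ) := by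
  set C := ENNReal.ofReal (8 ^ finrank ℝ V) / μ (ball 0 1)
  set L : ℤ → Set V := fun k => {z | ENNReal.ofReal (2 ^ k) ≤ F z}
  choose φ hφm hφ hφint using fun k => exists_hausdorffMeasure_inter_sphere_le μ hV (L k ∩ A)
  refine ⟨fun R => ∑' k, ENNReal.ofReal (2 ^ (k + 1)) * φ k R, fun R => ?_, ?_⟩
  · calc ∫⁻ z in A ∩ sphere 0 R, F z ∂μH[(finrank ℝ V : ℝ) - 1]
        ≤ ∫⁻ z in A ∩ sphere 0 R, dyadicLayerSum (F z) ∂μH[(finrank ℝ V : ℝ) - 1] :=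
          lintegral_mono fun z => le_dyadicLayerSum _
      _ = ∑' k, ENNReal.ofReal (2 ^ (k + 1)) *
            μH[(finrank ℝ V : ℝ) - 1] (L k ∩ A ∩ sphere 0 R) := by
          rw [lintegral_dyadicLayerSum _ hF]
          simp_rw [Measure.restrict_apply (measurableSet_le measurable_const hF), inter_assoc]
          rfl
      _ ≤ ∑' k, ENNReal.ofReal (2 ^ (k + 1)) * φ k R := by
          gcongr with k
          exact hφ k R
  · calc ∫⁻ R, ∑' k, ENNReal.ofReal (2 ^ (k + 1)) * φ k R
        = ∑' k, ENNReal.ofReal (2 ^ (k + 1)) * ∫⁻ R, φ k R := by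
          rw [lintegral_tsum fun k => ((hφm k).const_mul _).aemeasurable]
          simp_rw [lintegral_const_mul _ (hφm _)]
      _ ≤ ∑' k, ENNReal.ofReal (2 ^ (k + 1)) * (C * μ (L k ∩ A)) := by
          gcongr with k
          exact hφint k
      _ = C * ∫⁻ z in A, dyadicLayerSum (F z) ∂μ := by
          rw [lintegral_dyadicLayerSum _ hF, ← ENNReal.tsum_mul_left]
          simp_rw [Measure.restrict_apply (measurableSet_le measurable_const hF)]
          exact tsum_congr fun k => mul_left_comm _ _ _
      _ ≤ C * ∫⁻ z in A, 4 * F z ∂μ := by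
          gcongr
          exact dyadicLayerSum_le _
      _ = 4 * (C * ∫⁻ z in A, F z ∂μ) := by
          rw [lintegral_const_mul 4 hF, mul_left_comm]

theorem frequently_lintegral_inter_sphere_lt {F : V → ℝ≥0∞} (hF : Measurable F) {A : Set V}
    (hA : ∫⁻ z in A, F z ∂μ ≠ ⊤) {η : ℝ≥0∞} (hη : η ≠ 0) :
    ∃ᶠ R in atTop, ∫⁻ z in A ∩ sphere 0 R, F z ∂μH[(finrank ℝ V : ℝ) - 1] < η := by
  rcases (finrank ℝ V).eq_zero_or_pos with hV | hV
  · have := finrank_zero_iff.1 hV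
    refine Eventually.frequently ((eventually_gt_atTop 0).mono fun R hR => ?_)
    simp [sphere_eq_empty_of_subsingleton hR.ne', pos_iff_ne_zero.2 hη]
  obtain ⟨Φ, hΦ, hΦint⟩ := exists_lintegral_inter_sphere_le μ hV hF A
  have hΦfin : ∫⁻ R, Φ R ≠ ⊤ := ne_top_of_le_ne_top (ENNReal.mul_ne_top (by norm_num)
    (ENNReal.mul_ne_top (ENNReal.div_ne_top ENNReal.ofReal_ne_top
      (measure_ball_pos μ _ one_pos).ne') hA)) hΦint
  exact (frequently_lt_of_lintegral_ne_top hΦfin hη).mono fun R hR => (hΦ R).trans_lt hR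

end Eilenberg

theorem norm_outerNormal {E : Set (EucN N)} {x : EucN N} (h : x ∈ redBoundary E) :
    ‖outerNormal E x‖ = 1 := by
  rw [outerNormal, dif_pos (show ∃ ν, IsOuterNormal E x ν from h)]
  exact h.choose_spec.1

theorem ball_subset_lowerHalfBall {x ν : EucN N} (hν : ‖ν‖ = 1) (r : ℝ) :
    ball (x - (r / 2) • ν) (r / 2) ⊆ lowerHalfBall x ν r := by
  intro z hz
  set w := z - (x - (r / 2) • ν)
  have hw : ‖w‖ < r / 2 := mem_ball_iff_norm.1 hz
  have hzx : z - x = w - (r / 2) • ν := by simp only [w]; abel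
  have hr : 0 ≤ r / 2 := (norm_nonneg w).trans hw.le
  constructor
  · rw [dist_eq_norm, hzx]
    calc ‖w - (r / 2) • ν‖ ≤ ‖w‖ + ‖(r / 2) • ν‖ := norm_sub_le _ _
      _ < r := by rw [norm_smul, hν, Real.norm_of_nonneg hr]; linarith
  · rw [hzx, inner_sub_left, real_inner_smul_left, real_inner_self_eq_norm_sq, hν]
    have := real_inner_le_norm w ν
    rw [hν] at this
    linarith

theorem volume_closedBall_le_two_pow_mul_lowerHalfBall {x ν : EucN N} (hν : ‖ν‖ = 1) {r : ℝ}
    (hr : 0 < r) : volume (closedBall x r) ≤ 2 ^ N * volume (lowerHalfBall x ν r) := by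
  calc volume (closedBall x r)
      = ENNReal.ofReal (r ^ N) * volume (ball (0 : EucN N) 1) := by
        rw [Measure.addHaar_closedBall _ _ hr.le, finrank_euclideanSpace_fin]
    _ = 2 ^ N * volume (ball (x - (r / 2) • ν) (r / 2)) := by
        rw [Measure.addHaar_ball_of_pos _ _ (half_pos hr), finrank_euclideanSpace_fin, ← mul_assoc]
        congr 1
        rw [← ENNReal.ofReal_ofNat 2, ← ENNReal.ofReal_pow zero_le_two,
          ← ENNReal.ofReal_mul (by positivity), ← mul_pow, mul_div_cancel₀ _ two_ne_zero]
    _ ≤ 2 ^ N * volume (lowerHalfBall x ν r) := by gcongr; exact ball_subset_lowerHalfBall hν r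

def essClosure (E : Set (EucN N)) : Set (EucN N) :=
  {x | ¬Tendsto (fun r => volume (E ∩ closedBall x r) / volume (closedBall x r)) (𝓝[>] 0) (𝓝 0)}

theorem volume_essClosure_diff {E : Set (EucN N)} (hE : MeasurableSet E) :
    volume (essClosure E \ E) = 0 :=
  measure_mono_null (fun x hx => by simpa [essClosure, indicator_of_notMem hx.2] using hx.1)
    (ae_iff.1 (Besicovitch.ae_tendsto_measure_inter_div_of_measurableSet volume hE))

theorem setLIntegral_essClosure_le {E : Set (EucN N)} (hE : MeasurableSet E)
    (F : EucN N → ℝ≥0∞) : ∫⁻ z in essClosure E, F z ≤ ∫⁻ z in E, F z :=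
  calc ∫⁻ z in essClosure E, F z ≤ ∫⁻ z in E ∪ (essClosure E \ E), F z :=
        lintegral_mono_set (sdiff_subset_iff.1 subset_rfl)
    _ ≤ (∫⁻ z in E, F z) + ∫⁻ z in essClosure E \ E, F z := lintegral_union_le _ _ _
    _ = ∫⁻ z in E, F z := by
        rw [setLIntegral_measure_zero _ _ (volume_essClosure_diff hE), add_zero]

theorem essClosure_mono {E E' : Set (EucN N)} (h : E' ⊆ E) : essClosure E' ⊆ essClosure E :=
  fun _ hx hE => hx (tendsto_of_tendsto_of_tendsto_of_le_of_le tendsto_const_nhds hE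
    (fun _ => zero_le) fun _ =>
      ENNReal.div_le_div_right (measure_mono (inter_subset_inter_left _ h)) _)

theorem redBoundary_subset_essClosure (E : Set (EucN N)) : redBoundary E ⊆ essClosure E := by
  rintro x ⟨ν, hν, -, hlow⟩ hE
  have hc : (2 : ℝ≥0∞) ^ N ≠ ⊤ := ENNReal.pow_ne_top ENNReal.ofNat_ne_top
  have hc0 : (2 : ℝ≥0∞) ^ N ≠ 0 := pow_ne_zero _ two_ne_zero
  -- the lower half-ball fills a fixed fraction `2⁻ᴺ` of the ball, so `E` cannot have density `0`
  have hle : ∀ᶠ r in 𝓝[>] (0 : ℝ),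
      ((2 : ℝ≥0∞) ^ N)⁻¹ * (volume (E ∩ lowerHalfBall x ν r) / volume (lowerHalfBall x ν r)) ≤
        volume (E ∩ closedBall x r) / volume (closedBall x r) := by
    filter_upwards [self_mem_nhdsWithin] with r hr
    rw [div_eq_mul_inv, div_eq_mul_inv, mul_left_comm, ← ENNReal.mul_inv (Or.inl hc0) (Or.inl hc),
      ← div_eq_mul_inv]
    exact ENNReal.div_le_div (measure_mono (inter_subset_inter_right _ fun z hz => mem_closedBall.2
      (le_of_lt hz.1))) (volume_closedBall_le_two_pow_mul_lowerHalfBall hν hr)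
  have := le_of_tendsto_of_tendsto (ENNReal.Tendsto.const_mul hlow (Or.inl one_ne_zero)) hE hle
  simp [hc] at this

theorem isOuterNormal_congr {E E' : Set (EucN N)} {x ν : EucN N} {r : ℝ} (hr : 0 < r)
    (h : E ∩ ball x r = E' ∩ ball x r) : IsOuterNormal E x ν ↔ IsOuterNormal E' x ν := by
  have hloc {S : ℝ → Set (EucN N)} (hS : ∀ s, S s ⊆ ball x s) :
      (fun s => volume (E ∩ S s) / volume (S s)) =ᶠ[𝓝[>] 0]
        fun s => volume (E' ∩ S s) / volume (S s) := by
    filter_upwards [Ioo_mem_nhdsGT hr] with s hs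
    rw [← inter_eq_right.2 ((hS s).trans (ball_subset_ball hs.2.le)), ← inter_assoc, h,
      inter_assoc]
  rw [IsOuterNormal, IsOuterNormal, tendsto_congr' (hloc fun _ _ hz => hz.1),
    tendsto_congr' (hloc (S := lowerHalfBall x ν) fun _ _ hz => hz.1)]

theorem redBoundary_empty : redBoundary (∅ : Set (EucN N)) = ∅ :=
  eq_empty_of_forall_notMem fun _ ⟨_, _, _, h⟩ => by simp at h

theorem mem_redBoundary_congr {E E' : Set (EucN N)} {x : EucN N} {r : ℝ} (hr : 0 < r)
    (h : E ∩ ball x r = E' ∩ ball x r) : x ∈ redBoundary E ↔ x ∈ redBoundary E' :=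
  exists_congr fun _ => isOuterNormal_congr hr h

theorem mem_redBoundary_inter_closedBall_iff {E : Set (EucN N)} {x : EucN N} {R : ℝ}
    (hx : ‖x‖ < R) : x ∈ redBoundary (E ∩ closedBall 0 R) ↔ x ∈ redBoundary E :=
  mem_redBoundary_congr (sub_pos.2 hx) <| by
    rw [inter_assoc, inter_eq_right.2 (ball_subset_closedBall.trans
      (closedBall_subset_closedBall' (by rw [dist_zero_right]; linarith)))]

theorem notMem_redBoundary_inter_closedBall {E : Set (EucN N)} {x : EucN N} {R : ℝ}
    (hx : R < ‖x‖) : x ∉ redBoundary (E ∩ closedBall 0 R) := by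
  rw [mem_redBoundary_congr (E' := ∅) (sub_pos.2 hx), redBoundary_empty]
  · exact notMem_empty x
  · rw [empty_inter, inter_assoc,
      (closedBall_disjoint_ball (by rw [dist_zero_left]; linarith)).inter_eq, inter_empty]

theorem redBoundary_diff_redBoundary_inter_closedBall_subset (E : Set (EucN N)) (R : ℝ) :
    redBoundary E \ redBoundary (E ∩ closedBall 0 R) ⊆ {z | R ≤ ‖z‖} :=
  fun _ hz => not_lt.1 fun h => hz.2 ((mem_redBoundary_inter_closedBall_iff h).2 hz.1)

theorem redBoundary_inter_closedBall_diff_redBoundary_subset (E : Set (EucN N)) (R : ℝ) :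
    redBoundary (E ∩ closedBall 0 R) \ redBoundary E ⊆ essClosure E ∩ sphere 0 R := by
  rintro z ⟨hz, hzE⟩
  refine ⟨essClosure_mono inter_subset_left (redBoundary_subset_essClosure _ hz), ?_⟩
  rw [mem_sphere_zero_iff_norm]
  rcases lt_trichotomy ‖z‖ R with h | h | h
  · exact absurd ((mem_redBoundary_inter_closedBall_iff h).1 hz) hzE
  · exact h
  · exact absurd hz (notMem_redBoundary_inter_closedBall h)

theorem setLIntegral_redBoundary_diff_redBoundary_inter_closedBall_le (μ : Measure (EucN N))
    (E : Set (EucN N)) (R : ℝ) (G : EucN N → ℝ≥0∞) :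
    ∫⁻ z in redBoundary E \ redBoundary (E ∩ closedBall 0 R), G z ∂μ ≤
      ∫⁻ z in {z | R ≤ ‖z‖}, G z ∂μ.restrict (redBoundary E) := by
  rw [Measure.restrict_restrict (measurableSet_le measurable_const measurable_norm)]
  exact lintegral_mono_set fun z hz =>
    ⟨redBoundary_diff_redBoundary_inter_closedBall_subset E R hz, hz.1⟩

theorem setLIntegral_symmDiff_inter_closedBall_le (μ : Measure (EucN N)) (E : Set (EucN N))
    (R : ℝ) (G : EucN N → ℝ≥0∞) :
    ∫⁻ z in (E \ (E ∩ closedBall 0 R)) ∪ ((E ∩ closedBall 0 R) \ E), G z ∂μ ≤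
      ∫⁻ z in {z | R ≤ ‖z‖}, G z ∂μ.restrict E := by
  rw [Measure.restrict_restrict (measurableSet_le measurable_const measurable_norm)]
  refine lintegral_mono_set ?_
  rintro z (⟨hzE, hz⟩ | ⟨⟨hzE, -⟩, hz⟩)
  · exact ⟨le_of_lt (by simpa [hzE] using hz), hzE⟩
  · exact absurd hzE hz

theorem setLIntegral_redBoundary_inter_closedBall_diff_le (μ : Measure (EucN N))
    {G : EucN N → EucN N → ℝ≥0∞} {H : EucN N → ℝ≥0∞} (hH : Measurable H)
    (hGH : ∀ x ν, ‖ν‖ = 1 → G x ν ≤ H x) (E : Set (EucN N)) (R : ℝ) :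
    ∫⁻ z in redBoundary (E ∩ closedBall 0 R) \ redBoundary E,
        G z (outerNormal (E ∩ closedBall 0 R) z) ∂μ ≤
      ∫⁻ z in essClosure E ∩ sphere 0 R, H z ∂μ :=
  (setLIntegral_mono hH fun _ hz => hGH _ _ (norm_outerNormal hz.1)).trans
    (lintegral_mono_set (redBoundary_inter_closedBall_diff_redBoundary_subset E R))

theorem truncation_to_ball_general {N : ℕ} (f : EucN N → ℝ) (g : EucN N → EucN N → ℝ)
    (hf_loc : LocallyIntegrable f volume)
    (M : ℝ) (hM : 0 < M) (hgf : ∀ x ν, ‖ν‖ = 1 → g x ν ≤ M * f x)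
    (E : Set (EucN N)) (hE : HasLocFinPer E)
    (hEg : (∫⁻ z in redBoundary E, ENNReal.ofReal (g z (outerNormal E z)) ∂(HN1 N)) ≠ ⊤)
    (hEf : (∫⁻ z in E, ENNReal.ofReal (f z) ∂volume) ≠ ⊤)
    (ε : ℝ) (hε : 0 < ε) :
    ∃ R > (0:ℝ),
      (∫⁻ z in (E \ (E ∩ closedBall (0:EucN N) R)) ∪ ((E ∩ closedBall (0:EucN N) R) \ E),
        ENNReal.ofReal (f z) ∂volume) < ENNReal.ofReal ε ∧
      (∫⁻ z in redBoundary E \ redBoundary (E ∩ closedBall (0:EucN N) R),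
          ENNReal.ofReal (g z (outerNormal E z)) ∂(HN1 N)) +
        (∫⁻ z in redBoundary (E ∩ closedBall (0:EucN N) R) \ redBoundary E,
          ENNReal.ofReal (g z (outerNormal (E ∩ closedBall (0:EucN N) R) z)) ∂(HN1 N)) <
        ENNReal.ofReal ε := by
  -- a pointwise Borel majorant of `f`: a volume-null set may carry positive `H^{N-1}` measure on
  -- spheres, so an a.e. representative would not control the integrals over `∂*(E ∩ B_R)`
  obtain ⟨F, hF, hfF, hfF_ae⟩ :=
    hf_loc.aestronglyMeasurable.aemeasurable.ennreal_ofReal.exists_measurable_ge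
  have hFE : ∫⁻ z in essClosure E, F z ≠ ⊤ :=
    ne_top_of_le_ne_top hEf ((setLIntegral_essClosure_le hE.1 F).trans_eq
      (lintegral_congr_ae (ae_restrict_of_ae hfF_ae)).symm)
  have hM' : ENNReal.ofReal M ≠ 0 := (ENNReal.ofReal_pos.2 hM).ne'
  have hsphere := frequently_lintegral_inter_sphere_lt volume hF hFE
    (ENNReal.div_pos (ENNReal.ofReal_pos.2 (half_pos hε)).ne' (ENNReal.ofReal_ne_top (r := M))).ne'
  rw [finrank_euclideanSpace_fin, ← HN1] at hsphere
  have hvol := (tendsto_setLIntegral_setOf_le_atTop measurable_norm hEf).eventually_lt_const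
    (ENNReal.ofReal_pos.2 hε)
  have hper := (tendsto_setLIntegral_setOf_le_atTop measurable_norm hEg).eventually_lt_const
    (ENNReal.ofReal_pos.2 (half_pos hε))
  obtain ⟨R, hRsphere, hRvol, hRper, hR⟩ :=
    (hsphere.and_eventually (hvol.and (hper.and (eventually_gt_atTop 0)))).exists
  refine ⟨R, hR, (setLIntegral_symmDiff_inter_closedBall_le _ E R _).trans_lt hRvol, ?_⟩
  have hgF (x ν : EucN N) (hν : ‖ν‖ = 1) : ENNReal.ofReal (g x ν) ≤ ENNReal.ofReal M * F x :=
    calc ENNReal.ofReal (g x ν) ≤ ENNReal.ofReal M * ENNReal.ofReal (f x) := by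
          rw [← ENNReal.ofReal_mul hM.le]
          exact ENNReal.ofReal_le_ofReal (hgf x ν hν)
      _ ≤ ENNReal.ofReal M * F x := by gcongr; exact hfF x
  calc _ < ENNReal.ofReal (ε / 2) +
        ENNReal.ofReal M * (ENNReal.ofReal (ε / 2) / ENNReal.ofReal M) :=
        ENNReal.add_lt_add
          ((setLIntegral_redBoundary_diff_redBoundary_inter_closedBall_le _ E R _).trans_lt hRper)
          (((setLIntegral_redBoundary_inter_closedBall_diff_le _ (hF.const_mul _) hgF E R).trans_eq
            (lintegral_const_mul _ hF)).trans_lt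
            (ENNReal.mul_lt_mul_right hM' ENNReal.ofReal_ne_top hRsphere))
    _ = ENNReal.ofReal ε := by
        rw [ENNReal.mul_div_cancel hM' ENNReal.ofReal_ne_top,
          ← ENNReal.ofReal_add (half_pos hε).le (half_pos hε).le, add_halves]

/-- **Truncation to a ball with small `f`-volume and `g`-perimeter error.** -/
theorem truncation_to_ball {N : ℕ} (f : EucN N → ℝ) (g : EucN N → EucN N → ℝ)
    (hf_pos : ∀ x, 0 < f x) (hf_loc : LocallyIntegrable f volume)
    (hg_meas : Measurable fun p : EucN N × EucN N => g p.1 p.2)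
    (hg_pos : ∀ x ν, ‖ν‖ = 1 → 0 < g x ν)
    (M : ℝ) (hM : 0 < M) (hgf : ∀ x ν, ‖ν‖ = 1 → g x ν ≤ M * f x)
    (E : Set (EucN N)) (hE : HasLocFinPer E)
    (hEg : (∫⁻ z in redBoundary E, ENNReal.ofReal (g z (outerNormal E z)) ∂(HN1 N)) ≠ ⊤)
    (hEf : (∫⁻ z in E, ENNReal.ofReal (f z) ∂volume) ≠ ⊤)
    (ε : ℝ) (hε : 0 < ε) :
    ∃ R > (0:ℝ),
      (∫⁻ z in (E \ (E ∩ closedBall (0:EucN N) R)) ∪ ((E ∩ closedBall (0:EucN N) R) \ E),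
        ENNReal.ofReal (f z) ∂volume) < ENNReal.ofReal ε ∧
      (∫⁻ z in redBoundary E \ redBoundary (E ∩ closedBall (0:EucN N) R),
          ENNReal.ofReal (g z (outerNormal E z)) ∂(HN1 N)) +
        (∫⁻ z in redBoundary (E ∩ closedBall (0:EucN N) R) \ redBoundary E,
          ENNReal.ofReal (g z (outerNormal (E ∩ closedBall (0:EucN N) R) z)) ∂(HN1 N)) <
        ENNReal.ofReal ε :=
  truncation_to_ball_general f g hf_loc M hM hgf E hE hEg hEf ε hε
end
end
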